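/- Fix a ∈ (0, π/3) and ν ∈ {0,1}. Let h_ν : ℝ → ℝ be square-integrable, vanishing outside (5a/2, 3a), and let e_ν : ℝ → ℂ be square-integrable on (3a/2, 2a) and satisfy (M_{h_ν} e_ν)(x) = (−1)^ν e_ν(x) for almost every x ∈ (3a/2, 2a), where K_{h_ν}(x) = ∫_x^{3a} h_ν(τ) dτ and (M_{h_ν} f)(x) = ∫_{3a/2}^{7a/2−x} K_{h_ν}(x + t − a/2) f(t) dt. For α ∈ ℂ define q_{α,ν} : ℝ → ℂ by: q_{α,ν}(x) = 0 for x ∈ (0, 3a/2); q_{α,ν}(x) = α e_ν(x) for x ∈ (3a/2, 2a); q_{α,ν}(x) = −α K_{h_ν}(x + a/2) ∫_{3a/2}^{x−a/2} e_ν(t) dt for x ∈ (2a, 5a/2); q_{α,ν}(x) = h_ν(x) for x ∈ (5a/2, 3a); and q_{α,ν}(x) = 0 for x ∈ (3a, π) and outside (0, π). Let Q_ν(x) = (∫_{x+a/2}^{3a} q_{α,ν}(t) dt)(∫_a^{x−a/2} q_{α,ν}(τ) dτ) − (−1)^ν ∫_a^{7a/2−x} q_{α,ν}(t) (∫_{x+t−a/2}^{3a}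 q_{α,ν}(τ) dτ) dt for x ∈ (3a/2, 5a/2), and let w_ν(x) = q_{α,ν}(x) for x ∈ (a, 3a/2) ∪ (5a/2, 3a) and w_ν(x) = q_{α,ν}(x) + Q_ν(x) for x ∈ (3a/2, 5a/2). Then for every α ∈ ℂ: w_ν(x) = 0 for almost every x ∈ (a, 5a/2) and w_ν(x) = h_ν(x) for almost every x ∈ (5a/2, 3a); in particular w_ν is independent of α. -/

import Mathlib

open MeasureTheory Set
open scoped Real

noncomputable def Qfun (a : ℝ) (q : ℝ → ℂ) (ν : ℕ) (x : ℝ) : ℂ :=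
  (∫ t in (x + a / 2)..(3 * a), q t) * (∫ τ in a..(x - a / 2), q τ)
    - (-1) ^ ν * ∫ t in a..(7 * a / 2 - x), q t * (∫ τ in (x + t - a / 2)..(3 * a), q τ)

noncomputable def wfun (a : ℝ) (q : ℝ → ℂ) (ν : ℕ) (x : ℝ) : ℂ :=
  if x ∈ Set.Ioo (3 * a / 2) (5 * a / 2) then q x + Qfun a q ν x else q x

noncomputable def Kfun (a : ℝ) (h : ℝ → ℂ) (x : ℝ) : ℂ := ∫ τ in x..(3 * a), h τ

noncomputable def Mop (a : ℝ) (h f : ℝ → ℂ) (x : ℝ) : ℂ :=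
  ∫ t in (3 * a / 2)..(7 * a / 2 - x), Kfun a h (x + t - a / 2) * f t

noncomputable def qfam (a : ℝ) (h e : ℝ → ℂ) (α : ℂ) (x : ℝ) : ℂ :=
  if x ∈ Set.Ioo (3 * a / 2) (2 * a) then α * e x
  else if x ∈ Set.Ioo (2 * a) (5 * a / 2) then
    -α * Kfun a h (x + a / 2) * (∫ t in (3 * a / 2)..(x - a / 2), e t)
  else if x ∈ Set.Ioo (5 * a / 2) (3 * a) then h x
  else 0

/-!
Below `3a/2` the potential `q = q_{α,ν}` vanishes and above `5a/2` it equals `h`, so every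
`∫_y^{3a} q` with `y ≥ 5a/2` is `K_h(y)`. For `x ∈ (3a/2, 2a)` the product term of `Q` vanishes and
the second term is `(-1)^ν α (M_h e)(x) = α e(x) = q(x)`, so `w = q + Q = 0` wherever the eigen
equation holds. For `x ∈ (2a, 5a/2)` the second term vanishes and the product term is
`α K_h(x + a/2) ∫_{3a/2}^{x-a/2} e = -q(x)`.
-/

section IntervalIntegral

variable {E : Type*} [NormedAddCommGroup E] [NormedSpace ℝ E] {f : ℝ → E} {a b c : ℝ}

theorem intervalIntegral_eq_zero_of_eqOn_Iic (hf : EqOn f 0 (Iic c)) (ha : a ≤ c) (hb : b ≤ c) :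
    ∫ t in a..b, f t = 0 :=
  intervalIntegral.integral_zero_ae <|
    Filter.Eventually.of_forall fun _ ht => hf (ht.2.trans (max_le ha hb))

theorem intervalIntegral_eq_of_eqOn_Iic (hf : EqOn f 0 (Iic c)) (hac : a ≤ c) (hcb : c ≤ b) :
    ∫ t in a..b, f t = ∫ t in c..b, f t := by
  rw [intervalIntegral.integral_of_le (hac.trans hcb), intervalIntegral.integral_of_le hcb]
  exact setIntegral_eq_of_subset_of_forall_sdiff_eq_zero measurableSet_Ioc
    (Ioc_subset_Ioc_left hac) fun t ht => hf (not_lt.1 fun htc => ht.2 ⟨htc, ht.1.2⟩)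

end IntervalIntegral

section Potential

variable {a x y : ℝ} {h e : ℝ → ℂ} {α : ℂ} {ν : ℕ}

theorem qfam_eqOn_Iic : EqOn (qfam a h e α) 0 (Iic (3 * a / 2)) := by
  intro x hx
  simp only [mem_Iic] at hx
  rw [qfam, if_neg, if_neg, if_neg, Pi.zero_apply] <;> rintro ⟨h₁, h₂⟩ <;> linarith

theorem qfam_of_mem_Ioo_left (hx : x ∈ Ioo (3 * a / 2) (2 * a)) : qfam a h e α x = α * e x := by
  rw [qfam, if_pos hx]

theorem qfam_of_mem_Ioo_mid (hx : x ∈ Ioo (2 * a) (5 * a / 2)) :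
    qfam a h e α x = -α * Kfun a h (x + a / 2) * ∫ t in (3 * a / 2)..(x - a / 2), e t := by
  rw [qfam, if_neg fun hx' => hx.1.not_gt hx'.2, if_pos hx]

theorem qfam_eqOn_Ici (hh : ∀ x ∉ Ioo (5 * a / 2) (3 * a), h x = 0) :
    EqOn (qfam a h e α) h (Ici (5 * a / 2)) := by
  intro x hx
  simp only [mem_Ici] at hx
  rw [qfam, if_neg (by rintro ⟨h₁, h₂⟩; linarith), if_neg (by rintro ⟨h₁, h₂⟩; linarith)]
  split_ifs with hx'
  · rfl
  · exact (hh x hx').symm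

theorem integral_qfam_eq_Kfun (ha : 0 ≤ a) (hh : ∀ x ∉ Ioo (5 * a / 2) (3 * a), h x = 0)
    (hy : 5 * a / 2 ≤ y) : ∫ τ in y..(3 * a), qfam a h e α τ = Kfun a h y :=
  intervalIntegral.integral_congr fun _ ht =>
    qfam_eqOn_Ici hh (le_trans (le_min hy (by linarith)) ht.1)

theorem Qfun_qfam_of_mem_Ioo_left (ha : 0 ≤ a) (hh : ∀ x ∉ Ioo (5 * a / 2) (3 * a), h x = 0)
    (hx : x ∈ Ioo (3 * a / 2) (2 * a)) :
    Qfun a (qfam a h e α) ν x = -((-1) ^ ν * (α * Mop a h e x)) := by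
  obtain ⟨hx₁, hx₂⟩ := hx
  have hprod : ∫ τ in a..(x - a / 2), qfam a h e α τ = 0 :=
    intervalIntegral_eq_zero_of_eqOn_Iic qfam_eqOn_Iic (by linarith) (by linarith)
  have hvanish : EqOn (fun t => qfam a h e α t * ∫ τ in (x + t - a / 2)..(3 * a), qfam a h e α τ)
      0 (Iic (3 * a / 2)) := fun t ht => by simp [qfam_eqOn_Iic ht]
  have hcross : ∫ t in a..(7 * a / 2 - x),
      qfam a h e α t * ∫ τ in (x + t - a / 2)..(3 * a), qfam a h e α τ = α * Mop a h e x := by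
    rw [intervalIntegral_eq_of_eqOn_Iic hvanish (by linarith) (by linarith), Mop,
      ← intervalIntegral.integral_const_mul]
    refine intervalIntegral.integral_congr_Ioo_of_le (by linarith) fun t ht => ?_
    rw [qfam_of_mem_Ioo_left ⟨ht.1, by linarith [ht.2]⟩,
      integral_qfam_eq_Kfun ha hh (by linarith [ht.1])]
    ring
  rw [Qfun, hprod, hcross, mul_zero, zero_sub]

theorem Qfun_qfam_of_mem_Ioo_mid (ha : 0 ≤ a) (hh : ∀ x ∉ Ioo (5 * a / 2) (3 * a), h x = 0)
    (hx : x ∈ Ioo (2 * a) (5 * a / 2)) :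
    Qfun a (qfam a h e α) ν x = -qfam a h e α x := by
  obtain ⟨hx₁, hx₂⟩ := hx
  have hK : ∫ t in (x + a / 2)..(3 * a), qfam a h e α t = Kfun a h (x + a / 2) :=
    integral_qfam_eq_Kfun ha hh (by linarith)
  have hprod : ∫ τ in a..(x - a / 2), qfam a h e α τ = α * ∫ t in (3 * a / 2)..(x - a / 2), e t := by
    rw [intervalIntegral_eq_of_eqOn_Iic qfam_eqOn_Iic (by linarith) (by linarith),
      ← intervalIntegral.integral_const_mul]
    exact intervalIntegral.integral_congr_Ioo_of_le (by linarith) fun t ht =>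
      qfam_of_mem_Ioo_left ⟨ht.1, by linarith [ht.2]⟩
  have hcross : ∫ t in a..(7 * a / 2 - x),
      qfam a h e α t * ∫ τ in (x + t - a / 2)..(3 * a), qfam a h e α τ = 0 :=
    intervalIntegral_eq_zero_of_eqOn_Iic (c := 3 * a / 2) (fun t ht => by simp [qfam_eqOn_Iic ht])
      (by linarith) (by linarith)
  rw [Qfun, hK, hprod, hcross, qfam_of_mem_Ioo_mid ⟨hx₁, hx₂⟩]
  ring

theorem wfun_qfam_of_le (hx : x ≤ 3 * a / 2) : wfun a (qfam a h e α) ν x = 0 := by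
  rw [wfun, if_neg fun hx' => hx.not_gt hx'.1]
  exact qfam_eqOn_Iic hx

theorem wfun_qfam_of_ge (hh : ∀ x ∉ Ioo (5 * a / 2) (3 * a), h x = 0) (hx : 5 * a / 2 ≤ x) :
    wfun a (qfam a h e α) ν x = h x := by
  rw [wfun, if_neg fun hx' => hx.not_gt hx'.2]
  exact qfam_eqOn_Ici hh hx

theorem wfun_qfam_of_mem_Ioo_left (ha : 0 ≤ a) (hh : ∀ x ∉ Ioo (5 * a / 2) (3 * a), h x = 0)
    (hx : x ∈ Ioo (3 * a / 2) (2 * a)) (heig : Mop a h e x = (-1) ^ ν * e x) :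
    wfun a (qfam a h e α) ν x = 0 := by
  rw [wfun, if_pos ⟨hx.1, by linarith [hx.2]⟩, Qfun_qfam_of_mem_Ioo_left ha hh hx,
    qfam_of_mem_Ioo_left hx, heig]
  have hsq : ((-1 : ℂ) ^ ν) ^ 2 = 1 := by rw [← pow_mul, mul_comm, pow_mul, neg_one_sq, one_pow]
  linear_combination -(α * e x) * hsq

theorem wfun_qfam_of_mem_Ioo_mid (ha : 0 ≤ a) (hh : ∀ x ∉ Ioo (5 * a / 2) (3 * a), h x = 0)
    (hx : x ∈ Ioo (2 * a) (5 * a / 2)) : wfun a (qfam a h e α) ν x = 0 := by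
  rw [wfun, if_pos ⟨by linarith [hx.1], hx.2⟩, Qfun_qfam_of_mem_Ioo_mid ha hh hx, add_neg_cancel]

end Potential

theorem statement14_general
    (a : ℝ) (ha : a ∈ Set.Ioo 0 (π / 3))
    (ν : ℕ)
    (h : ℝ → ℝ)
    (hh0 : ∀ x : ℝ, x ∉ Set.Ioo (5 * a / 2) (3 * a) → h x = 0)
    (e : ℝ → ℂ)
    (heig : ∀ᵐ x ∂(volume.restrict (Set.Ioo (3 * a / 2) (2 * a))),
      Mop a (fun y => (h y : ℂ)) e x = (-1) ^ ν * e x) :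
    ∀ α : ℂ,
      (∀ᵐ x ∂(volume.restrict (Set.Ioo a (5 * a / 2))),
        wfun a (qfam a (fun y => (h y : ℂ)) e α) ν x = 0) ∧
      (∀ᵐ x ∂(volume.restrict (Set.Ioo (5 * a / 2) (3 * a))),
        wfun a (qfam a (fun y => (h y : ℂ)) e α) ν x = (h x : ℂ)) := by
  intro α
  have ha₀ : 0 ≤ a := ha.1.le
  have hh : ∀ x ∉ Ioo (5 * a / 2) (3 * a), (h x : ℂ) = 0 := fun x hx => by simp [hh0 x hx]
  refine ⟨?_, ?_⟩
  · rw [ae_restrict_iff' measurableSet_Ioo] at heig ⊢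
    filter_upwards [heig, volume.ae_ne (2 * a)] with x hxeig hx₂ hx
    rcases le_or_gt x (3 * a / 2) with hx₁ | hx₁
    · exact wfun_qfam_of_le hx₁
    rcases hx₂.lt_or_gt with hx₂ | hx₂
    · exact wfun_qfam_of_mem_Ioo_left ha₀ hh ⟨hx₁, hx₂⟩ (hxeig ⟨hx₁, hx₂⟩)
    · exact wfun_qfam_of_mem_Ioo_mid ha₀ hh ⟨hx₂, hx.2⟩
  · filter_upwards [ae_restrict_mem measurableSet_Ioo] with x hx
    exact wfun_qfam_of_ge hh hx.1.le

theorem statement14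
    (a : ℝ) (ha : a ∈ Set.Ioo 0 (π / 3))
    (ν : ℕ) (hν : ν = 0 ∨ ν = 1)
    (h : ℝ → ℝ)
    (hh2 : MemLp h 2 volume)
    (hh0 : ∀ x : ℝ, x ∉ Set.Ioo (5 * a / 2) (3 * a) → h x = 0)
    (e : ℝ → ℂ)
    (he2 : MemLp e 2 (volume.restrict (Set.Ioo (3 * a / 2) (2 * a))))
    (heig : ∀ᵐ x ∂(volume.restrict (Set.Ioo (3 * a / 2) (2 * a))),
      Mop a (fun y => (h y : ℂ)) e x = (-1) ^ ν * e x) :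
    ∀ α : ℂ,
      (∀ᵐ x ∂(volume.restrict (Set.Ioo a (5 * a / 2))),
        wfun a (qfam a (fun y => (h y : ℂ)) e α) ν x = 0) ∧
      (∀ᵐ x ∂(volume.restrict (Set.Ioo (5 * a / 2) (3 * a))),
        wfun a (qfam a (fun y => (h y : ℂ)) e α) ν x = (h x : ℂ)) :=
  statement14_general a ha ν h hh0 e heig
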